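/- Let k be a field of characteristic 2 and let δ be the k-derivation of k[x,y] with δ(x) = x y² and δ(y) = x² + y³. Then k[x², y², x³ + x y³] is contained in the ring of constants of δ, and k[x², y², x³ + x y³] is isomorphic as a k-algebra to k[X,Y,Z]/(Z² + X³ + X Y³) via X ↦ x², Y ↦ y², Z ↦ x³ + x y³. -/

import Mathlib

/-!
In characteristic 2 every derivation kills squares, and a direct computation shows that `δ`
kills `w = x³ + x y³`. For the kernel, write `Z` for the third variable: modulo `Z² + w`, every
polynomial is `a + b Z` with `a, b ∈ k[X, Y]`, which maps to `a(x², y²) + b(x², y²) w`. If this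
vanishes, differentiating in `x` kills both squared parts and leaves `b(x², y²) ∂ₓw = 0`; as
`∂ₓw ≠ 0` and `k[x, y]` is a domain, `b = 0`, and then `a = 0`.
-/

open MvPolynomial

theorem Derivation.map_pow_char_eq_zero {R A M : Type*} [CommSemiring R] [CommSemiring A]
    [Algebra R A] [AddCommMonoid M] [Module A M] [Module R M] (D : Derivation R A M)
    (p : ℕ) [CharP A p] (a : A) : D (a ^ p) = 0 := by
  rw [D.leibniz_pow, ← Nat.cast_smul_eq_nsmul A, CharP.cast_eq_zero, zero_smul]

theorem Derivation.map_cube_add_mul_cube_eq_zero {R A : Type*} [CommSemiring R] [CommRing A]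
    [Algebra R A] [CharP A 2] (D : Derivation R A A) {x y : A} (hx : D x = x * y ^ 2)
    (hy : D y = x ^ 2 + y ^ 3) : D (x ^ 3 + x * y ^ 3) = 0 := by
  simp only [map_add, D.leibniz, D.leibniz_pow, hx, hy, smul_eq_mul, nsmul_eq_mul]
  linear_combination (3 * x ^ 3 * y ^ 2 + 2 * x * y ^ 5) * CharTwo.two_eq_zero (R := A)

namespace MvPolynomial

theorem derivation_expand_eq_zero {R σ M : Type*} [CommSemiring R] [AddCommMonoid M]
    [Module (MvPolynomial σ R) M] [Module R M] (p : ℕ) [CharP R p]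
    (D : Derivation R (MvPolynomial σ R) M) (f : MvPolynomial σ R) : D (expand p f) = 0 := by
  have hf : expand p f ∈ Algebra.adjoin R (Set.range fun i => (X i : MvPolynomial σ R) ^ p) := by
    rw [Algebra.adjoin_range_eq_range_aeval]
    exact ⟨f, rfl⟩
  refine Derivation.eqOn_adjoin (D2 := 0) ?_ hf
  rintro _ ⟨i, rfl⟩
  exact D.map_pow_char_eq_zero p _

theorem eq_zero_of_expand_add_expand_mul_eq_zero {R σ : Type*} [CommRing R] [IsDomain R]
    {p : ℕ} [CharP R p] (hp : 0 < p) {a b c : MvPolynomial σ R} {i : σ} (hi : pderiv i c ≠ 0)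
    (h : expand p a + expand p b * c = 0) : a = 0 ∧ b = 0 := by
  have hb : b = 0 := by
    have h' := congrArg (pderiv i) h
    rw [map_add, Derivation.leibniz, derivation_expand_eq_zero, derivation_expand_eq_zero,
      smul_zero, add_zero, zero_add, map_zero, smul_eq_mul, mul_eq_zero] at h'
    exact (expand_eq_zero hp).1 (h'.resolve_right hi)
  subst hb
  rw [map_zero, zero_mul, add_zero] at h
  exact ⟨(expand_eq_zero hp).1 h, rfl⟩

theorem exists_mk_eq_rename_add_rename_mul_X_last {R : Type*} [CommRing R] {n : ℕ}
    (c : MvPolynomial (Fin n) R) (f : MvPolynomial (Fin (n + 1)) R) :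
    ∃ a b : MvPolynomial (Fin n) R,
      Ideal.Quotient.mk (Ideal.span {X (Fin.last n) ^ 2 + rename Fin.castSucc c}) f =
        Ideal.Quotient.mk _ (rename Fin.castSucc a + rename Fin.castSucc b * X (Fin.last n)) := by
  set π := Ideal.Quotient.mk (Ideal.span {X (Fin.last n) ^ 2 + rename Fin.castSucc c})
  have hZ : π (X (Fin.last n)) ^ 2 = -π (rename Fin.castSucc c) := by
    rw [eq_neg_iff_add_eq_zero, ← map_pow, ← map_add, Ideal.Quotient.eq_zero_iff_mem]
    exact Ideal.subset_span rfl
  induction f using MvPolynomial.induction_on with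
  | C r => exact ⟨C r, 0, by simp⟩
  | add f g hf hg =>
    obtain ⟨a, b, hf⟩ := hf
    obtain ⟨a', b', hg⟩ := hg
    exact ⟨a + a', b + b', by simp only [map_add, map_mul, hf, hg]; ring⟩
  | mul_X f i hf =>
    obtain ⟨a, b, hf⟩ := hf
    induction i using Fin.lastCases with
    | last =>
      refine ⟨-(b * c), a, ?_⟩
      simp only [map_mul, map_add, map_neg, hf]
      linear_combination π (rename Fin.castSucc b) * hZ
    | cast j =>
      refine ⟨a * X j, b * X j, ?_⟩
      simp only [map_mul, map_add, rename_X, hf]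
      ring

theorem ker_aeval_snoc_sq {R : Type*} [CommRing R] [IsDomain R] [CharP R 2] {n : ℕ}
    (c : MvPolynomial (Fin n) R) (hc : c ^ 2 = expand 2 c) {i : Fin n} (hi : pderiv i c ≠ 0) :
    RingHom.ker (aeval (R := R) (Fin.snoc (fun j => X j ^ 2) c : Fin (n + 1) → MvPolynomial (Fin n) R)) =
      Ideal.span {X (Fin.last n) ^ 2 + rename Fin.castSucc c} := by
  set ψ := aeval (R := R) (Fin.snoc (fun j => X j ^ 2) c : Fin (n + 1) → MvPolynomial (Fin n) R)
  have hψ_rename (g : MvPolynomial (Fin n) R) : ψ (rename Fin.castSucc g) = expand 2 g := by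
    rw [aeval_rename, Fin.snoc_comp_castSucc]
    rfl
  have hrel : X (Fin.last n) ^ 2 + rename Fin.castSucc c ∈ RingHom.ker ψ := by
    rw [RingHom.mem_ker, map_add, map_pow, hψ_rename, aeval_X, Fin.snoc_last, hc,
      CharTwo.add_self_eq_zero]
  have hspan := (Ideal.span_singleton_le_iff_mem _).2 hrel
  refine le_antisymm (fun f hf => ?_) hspan
  obtain ⟨a, b, hab⟩ := exists_mk_eq_rename_add_rename_mul_X_last c f
  have hψf : ψ f = expand 2 a + expand 2 b * c := by
    rw [Ideal.Quotient.eq] at hab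
    have := hspan hab
    rw [RingHom.mem_ker, map_sub, sub_eq_zero] at this
    rw [this, map_add, map_mul, hψ_rename, hψ_rename, aeval_X, Fin.snoc_last]
  obtain ⟨rfl, rfl⟩ := eq_zero_of_expand_add_expand_mul_eq_zero two_pos hi
    (hψf ▸ RingHom.mem_ker.1 hf)
  simpa [Ideal.Quotient.eq_zero_iff_mem] using hab

end MvPolynomial

/-- In characteristic 2, for the derivation `δ` of `k[x,y]` with `δ x = x y²`,
`δ y = x² + y³`, the subalgebra `k[x², y², x³ + x y³]` is contained in the ring of
constants of `δ`, and it is isomorphic to `k[X,Y,Z]/(Z² + X³ + X Y³)` via `X ↦ x²`,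
`Y ↦ y²`, `Z ↦ x³ + x y³` (formalized by saying the evaluation map has kernel
`(Z² + X³ + X Y³)` and range `k[x², y², x³ + x y³]`). -/
theorem stmt4 (k : Type*) [Field k] [CharP k 2]
    (δ : Derivation k (MvPolynomial (Fin 2) k) (MvPolynomial (Fin 2) k))
    (hx : δ (X 0) = X 0 * X 1 ^ 2) (hy : δ (X 1) = X 0 ^ 2 + X 1 ^ 3)
    (φ : MvPolynomial (Fin 3) k →ₐ[k] MvPolynomial (Fin 2) k)
    (hφ : φ = aeval ![X 0 ^ 2, X 1 ^ 2, X 0 ^ 3 + X 0 * X 1 ^ 3]) :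
    (∀ f ∈ Algebra.adjoin k
        {(X 0 ^ 2 : MvPolynomial (Fin 2) k), X 1 ^ 2, X 0 ^ 3 + X 0 * X 1 ^ 3}, δ f = 0) ∧
    φ.range = Algebra.adjoin k
        {(X 0 ^ 2 : MvPolynomial (Fin 2) k), X 1 ^ 2, X 0 ^ 3 + X 0 * X 1 ^ 3} ∧
    RingHom.ker φ.toRingHom =
      Ideal.span {X 2 ^ 2 + X 0 ^ 3 + X 0 * X 1 ^ 3} := by
  subst hφ
  set w : MvPolynomial (Fin 2) k := X 0 ^ 3 + X 0 * X 1 ^ 3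
  refine ⟨fun f hf => Derivation.eqOn_adjoin (D2 := 0) ?_ hf, ?_, ?_⟩
  · rintro _ (rfl | rfl | rfl)
    · exact δ.map_pow_char_eq_zero 2 _
    · exact δ.map_pow_char_eq_zero 2 _
    · exact δ.map_cube_add_mul_cube_eq_zero hx hy
  · rw [← Algebra.adjoin_range_eq_range_aeval]
    simp only [Matrix.range_cons, Matrix.range_empty, Set.union_empty, Set.singleton_union]
  · have hsnoc : ![X 0 ^ 2, X 1 ^ 2, w] = Fin.snoc (fun j => X j ^ 2) w := by
      ext j; fin_cases j <;> rfl
    have hgen : (X 2 ^ 2 + X 0 ^ 3 + X 0 * X 1 ^ 3 : MvPolynomial (Fin 3) k) =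
        X (Fin.last 2) ^ 2 + rename Fin.castSucc w := by
      simp only [w, map_add, map_mul, map_pow, rename_X]
      rw [add_assoc]
      rfl
    have hw : w ^ 2 = expand 2 w := by
      simp only [w, map_add, map_mul, map_pow, expand_X]
      linear_combination X 0 ^ 4 * X 1 ^ 3 * CharTwo.two_eq_zero (R := MvPolynomial (Fin 2) k)
    have hdw : pderiv 0 w ≠ 0 := by
      intro h
      simpa [w, pderiv_X] using congrArg (eval ![0, 1]) h
    rw [hsnoc, hgen]
    exact ker_aeval_snoc_sq w hw hdw
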